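/- The Fenchel coupling F(Q, Y) = h(Q) + h*(Y) - tr(YQ), where h is the von Neumann entropy on the unit-trace spectrahedron C and h* its conjugate, satisfies F(Q, Y) ≥ (1/2)‖Q - Q(Y)‖₁² for all Q ∈ C and Hermitian traceless Y, where Q(Y) = exp(Y)/tr(exp(Y)). -/

import Mathlib

open scoped BigOperators ComplexOrder

/-- Von Neumann entropy h(Q) = tr(Q log Q) = sum of eigenvalue entropies (0 log 0 = 0). -/
noncomputable def vnEntropy {M : ℕ} (Q : Matrix (Fin M) (Fin M) ℂ) : ℝ :=
  if hQ : Q.IsHermitian then ∑ i, hQ.eigenvalues i * Real.log (hQ.eigenvalues i) else 0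

/-- Nuclear (trace) norm of a Hermitian matrix: sum of absolute values of eigenvalues. -/
noncomputable def nuclearNorm {M : ℕ} (Q : Matrix (Fin M) (Fin M) ℂ) : ℝ :=
  if hQ : Q.IsHermitian then ∑ i, |hQ.eigenvalues i| else 0

/-- Spectral norm of a Hermitian matrix: maximum absolute eigenvalue. -/
noncomputable def spectralNorm' {M : ℕ} (Q : Matrix (Fin M) (Fin M) ℂ) : ℝ :=
  if hQ : Q.IsHermitian then ⨆ i, |hQ.eigenvalues i| else 0

/-- The matrix exponential mapping Q(Y) = exp(Y)/tr(exp(Y)). -/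
noncomputable def expMap {M : ℕ} (Y : Matrix (Fin M) (Fin M) ℂ) : Matrix (Fin M) (Fin M) ℂ :=
  ((NormedSpace.exp Y).trace)⁻¹ • NormedSpace.exp Y

/-- The Fenchel coupling F(Q,Y) = h(Q) + h*(Y) - tr(YQ), with h*(Y) = log tr(exp Y). -/
noncomputable def fenchelCoupling {M : ℕ} (Q Y : Matrix (Fin M) (Fin M) ℂ) : ℝ :=
  vnEntropy Q + Real.log ((NormedSpace.exp Y).trace.re) - ((Y * Q).trace).re

/-!
Write `Q = U diag(p) U*` and `Y = V diag(μ) V*`, so that `Q(Y) = V diag(q) V*` with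
`q = softmax μ`. With the doubly stochastic overlaps `c i j = |(U* V) i j|²`, the Fenchel
coupling is the relative entropy `∑ c i j · q j · klFun (p i / q j)`. Choosing a unitary `S` with
`‖Q - Q(Y)‖₁ = tr (S (Q - Q(Y)))`, the trace norm becomes `∑ e i j (p i - q j)` with
`|e i j| ≤ |(U* V) i j| |(U* S V) i j|`. Cauchy–Schwarz with weights `p i + 2 q j` then bounds its
square by `3 · (2/3) F`: the first factor because `U* S V` is unitary, the second by the scalar
inequality `3/2 (s - t)² / (s + 2t) ≤ t · klFun (s / t)`.
-/

open Real Matrix InformationTheory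

section Csiszar

open Set

lemma monotoneOn_log_sub_three_halves_mul_div_sq :
    MonotoneOn (fun x : ℝ => log x - 3 / 2 * ((x - 1) * (x + 5)) / (x + 2) ^ 2) (Ioi 0) := by
  have hderiv : ∀ x ∈ Ioi (0 : ℝ), HasDerivAt
      (fun x : ℝ => log x - 3 / 2 * ((x - 1) * (x + 5)) / (x + 2) ^ 2)
      (x⁻¹ - 27 / (x + 2) ^ 3) x := by
    intro x (hx : 0 < x)
    have hx2 : x + 2 ≠ 0 := by positivity
    refine ((hasDerivAt_log hx.ne').sub
      (((((hasDerivAt_id' x).sub_const 1).fun_mul ((hasDerivAt_id' x).add_const 5)).const_mul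
        (3 / 2)).div (((hasDerivAt_id' x).add_const 2).fun_pow 2)
          (pow_ne_zero 2 hx2))).congr_deriv ?_
    field_simp
    ring
  refine monotoneOn_of_hasDerivWithinAt_nonneg (f' := fun x => x⁻¹ - 27 / (x + 2) ^ 3)
    (convex_Ioi 0) (fun x hx => (hderiv x hx).continuousAt.continuousWithinAt)
    (fun x hx => ?_) fun x hx => ?_
  · rw [interior_Ioi] at hx ⊢
    exact (hderiv x hx).hasDerivWithinAt
  rw [interior_Ioi] at hx
  have hx : 0 < x := hx
  -- `(x + 2)³ - 27 x = (x - 1)² (x + 8)`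
  rw [sub_nonneg, div_le_iff₀ (by positivity), ← div_eq_inv_mul, le_div_iff₀ hx]
  nlinarith [mul_nonneg (sq_nonneg (x - 1)) (by linarith : (0:ℝ) ≤ x + 8)]

lemma three_halves_mul_sq_div_le_klFun {x : ℝ} (hx : 0 ≤ x) :
    3 / 2 * (x - 1) ^ 2 / (x + 2) ≤ klFun x := by
  set g : ℝ → ℝ := fun x => klFun x - 3 / 2 * (x - 1) ^ 2 / (x + 2)
  have hderiv : ∀ x : ℝ, 0 < x →
      HasDerivAt g (log x - 3 / 2 * ((x - 1) * (x + 5)) / (x + 2) ^ 2) x := by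
    intro x hx
    have hx2 : x + 2 ≠ 0 := by positivity
    refine ((hasDerivAt_klFun hx.ne').sub
      (((((hasDerivAt_id' x).sub_const 1).fun_pow 2).const_mul (3 / 2)).div
        ((hasDerivAt_id' x).add_const 2) hx2)).congr_deriv ?_
    field_simp
    ring
  have hconv : ConvexOn ℝ (Ici 0) g := by
    refine MonotoneOn.convexOn_of_deriv (convex_Ici 0) ?_ ?_ ?_
    · exact continuous_klFun.continuousOn.sub (ContinuousOn.div (by fun_prop) (by fun_prop)
        fun x (hx : 0 ≤ x) => by positivity)
    · rw [interior_Ici]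
      exact fun x hx => (hderiv x hx).differentiableAt.differentiableWithinAt
    · rw [interior_Ici]
      exact monotoneOn_log_sub_three_halves_mul_div_sq.congr fun x hx => ((hderiv x hx).deriv).symm
  have hmin : IsMinOn g (Ici 0) 1 := by
    refine hconv.isMinOn_of_rightDeriv_eq_zero (by simp) ?_
    rw [((hderiv 1 one_pos).hasDerivWithinAt).derivWithin (uniqueDiffWithinAt_Ioi 1)]
    norm_num
  have := hmin (mem_Ici.2 hx)
  simp only [g, klFun_one] at this
  norm_num at this
  linarith

lemma sq_sub_div_le_mul_klFun {s t : ℝ} (hs : 0 ≤ s) (ht : 0 < t) :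
    3 / 2 * (s - t) ^ 2 / (s + 2 * t) ≤ t * klFun (s / t) := by
  have h := mul_le_mul_of_nonneg_left (three_halves_mul_sq_div_le_klFun (div_nonneg hs ht.le))
    ht.le
  refine le_of_eq_of_le ?_ h
  have : s + 2 * t ≠ 0 := by positivity
  field_simp

end Csiszar

section DoubleSum

variable {ι κ : Type*} [Fintype ι] [Fintype κ] {p : ι → ℝ} {q : κ → ℝ}

lemma sum_sum_sq_mul_add_two_mul_le_three {b : ι → κ → ℝ} (hp : ∀ i, 0 ≤ p i)
    (hq : ∀ j, 0 ≤ q j) (hp1 : ∑ i, p i = 1) (hq1 : ∑ j, q j = 1)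
    (hb_row : ∀ i, ∑ j, b i j ^ 2 ≤ 1) (hb_col : ∀ j, ∑ i, b i j ^ 2 ≤ 1) :
    ∑ i, ∑ j, b i j ^ 2 * (p i + 2 * q j) ≤ 3 := by
  calc ∑ i, ∑ j, b i j ^ 2 * (p i + 2 * q j)
      = ∑ i, p i * ∑ j, b i j ^ 2 + 2 * ∑ j, q j * ∑ i, b i j ^ 2 := by
        simp only [mul_add, Finset.sum_add_distrib, Finset.mul_sum]
        rw [Finset.sum_comm (f := fun i j => b i j ^ 2 * (2 * q j))]
        congr 1 <;> refine Finset.sum_congr rfl fun _ _ => Finset.sum_congr rfl fun _ _ => by ring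
    _ ≤ ∑ i, p i * 1 + 2 * ∑ j, q j * 1 := by
        gcongr with i _ j _
        · exact hp i
        · exact hb_row i
        · exact hq j
        · exact hb_col j
    _ = 3 := by simp only [mul_one, hp1, hq1]; norm_num

theorem sq_sum_mul_sub_le_two_mul_sum_mul_klFun {a b e : ι → κ → ℝ} (hp : ∀ i, 0 ≤ p i)
    (hq : ∀ j, 0 < q j) (hp1 : ∑ i, p i = 1) (hq1 : ∑ j, q j = 1)
    (hb_row : ∀ i, ∑ j, b i j ^ 2 ≤ 1) (hb_col : ∀ j, ∑ i, b i j ^ 2 ≤ 1)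
    (he : ∀ i j, |e i j| ≤ a i j * b i j) :
    (∑ i, ∑ j, e i j * (p i - q j)) ^ 2 ≤
      2 * ∑ i, ∑ j, a i j ^ 2 * (q j * klFun (p i / q j)) := by
  have hw : ∀ i j, 0 < p i + 2 * q j := fun i j => by linarith [hp i, hq j]
  -- the weights `p i + 2 * q j` are the denominators of `sq_sub_div_le_mul_klFun`
  have hCS : (∑ i, ∑ j, e i j * (p i - q j)) ^ 2 ≤ (∑ i, ∑ j, b i j ^ 2 * (p i + 2 * q j)) *
      ∑ i, ∑ j, a i j ^ 2 * ((p i - q j) ^ 2 / (p i + 2 * q j)) := by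
    simp only [← Fintype.sum_prod_type']
    refine Finset.sum_sq_le_sum_mul_sum_of_sq_le_mul _ (fun ij _ => ?_) (fun ij _ => ?_)
      fun ij _ => ?_
    · exact mul_nonneg (sq_nonneg _) (hw ij.1 ij.2).le
    · exact mul_nonneg (sq_nonneg _) (div_nonneg (sq_nonneg _) (hw ij.1 ij.2).le)
    · have hab : e ij.1 ij.2 ^ 2 ≤ (a ij.1 ij.2 * b ij.1 ij.2) ^ 2 := by
        simpa only [sq_abs] using pow_le_pow_left₀ (abs_nonneg _) (he ij.1 ij.2) 2
      calc (e ij.1 ij.2 * (p ij.1 - q ij.2)) ^ 2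
          ≤ (a ij.1 ij.2 * b ij.1 ij.2) ^ 2 * (p ij.1 - q ij.2) ^ 2 := by
            rw [mul_pow]; gcongr
        _ = _ := by
            rw [mul_div_assoc', mul_div_assoc', eq_div_iff (hw ij.1 ij.2).ne']
            ring
  have hcsiszar : ∑ i, ∑ j, a i j ^ 2 * ((p i - q j) ^ 2 / (p i + 2 * q j)) ≤
      2 / 3 * ∑ i, ∑ j, a i j ^ 2 * (q j * klFun (p i / q j)) := by
    simp only [Finset.mul_sum]
    refine Finset.sum_le_sum fun i _ => Finset.sum_le_sum fun j _ => ?_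
    have h := sq_sub_div_le_mul_klFun (hp i) (hq j)
    rw [mul_div_assoc] at h
    nlinarith [mul_le_mul_of_nonneg_left h (sq_nonneg (a i j))]
  calc (∑ i, ∑ j, e i j * (p i - q j)) ^ 2
      ≤ 3 * (2 / 3 * ∑ i, ∑ j, a i j ^ 2 * (q j * klFun (p i / q j))) :=
        hCS.trans (mul_le_mul (sum_sum_sq_mul_add_two_mul_le_three hp (fun j => (hq j).le) hp1
          hq1 hb_row hb_col) hcsiszar
          (Finset.sum_nonneg fun i _ => Finset.sum_nonneg fun j _ =>
            mul_nonneg (sq_nonneg _) (div_nonneg (sq_nonneg _) (hw i j).le)) (by norm_num))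
    _ = _ := by ring

end DoubleSum

section Conj

variable {n R : Type*} [Fintype n] [DecidableEq n] [CommRing R] [StarRing R]

lemma Matrix.trace_mul_conj_diagonal (X U : Matrix n n R) (d : n → R) :
    (X * (U * diagonal d * star U)).trace = ∑ i, d i * (star U * X * U) i i := by
  have h : (X * (U * diagonal d * star U)).trace = (diagonal d * (star U * X * U)).trace := by
    rw [trace_mul_comm, Matrix.mul_assoc, Matrix.mul_assoc, trace_mul_comm]
    simp only [Matrix.mul_assoc]
  rw [h]
  simp only [Matrix.trace, diag_apply, diagonal_mul]

lemma Matrix.trace_mul_sub_conj_diagonal {U V : Matrix n n R} (hU : U ∈ unitaryGroup n R)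
    (hV : V ∈ unitaryGroup n R) (S : Matrix n n R) (p q : n → R) :
    (S * (U * diagonal p * star U - V * diagonal q * star V)).trace =
      ∑ i, ∑ j, (star U * S * V) i j * star ((star U * V) i j) * (p i - q j) := by
  have hU' : star U * S * U = (star U * S * V) * star (star U * V) := by
    rw [star_mul, star_star]
    simp only [Matrix.mul_assoc]
    rw [← Matrix.mul_assoc V, Unitary.mul_star_self_of_mem hV, Matrix.one_mul]
  have hV' : star V * S * V = star (star U * V) * (star U * S * V) := by
    rw [star_mul, star_star]
    simp only [Matrix.mul_assoc]
    rw [← Matrix.mul_assoc U, Unitary.mul_star_self_of_mem hU, Matrix.one_mul]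
  rw [Matrix.mul_sub, trace_sub, trace_mul_conj_diagonal, trace_mul_conj_diagonal, hU', hV']
  generalize star U * S * V = B
  generalize star U * V = A
  simp only [mul_apply, star_apply, Finset.mul_sum, mul_sub, Finset.sum_sub_distrib]
  rw [Finset.sum_comm (f := fun i j => B i j * star (A i j) * q j)]
  congr 1 <;> refine Finset.sum_congr rfl fun i _ => Finset.sum_congr rfl fun j _ => by ring

end Conj

section Unitary

variable {𝕜 n : Type*} [RCLike 𝕜] [Fintype n] [DecidableEq n] {U : Matrix n n 𝕜}

lemma Matrix.sum_norm_sq_row_of_mem_unitaryGroup (hU : U ∈ unitaryGroup n 𝕜) (i : n) :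
    ∑ j, ‖U i j‖ ^ 2 = 1 := by
  have h := congrFun (congrFun (mem_unitaryGroup_iff.1 hU) i) i
  simp only [mul_apply, star_apply, RCLike.star_def, RCLike.mul_conj, one_apply_eq] at h
  exact_mod_cast h

lemma Matrix.sum_norm_sq_col_of_mem_unitaryGroup (hU : U ∈ unitaryGroup n 𝕜) (j : n) :
    ∑ i, ‖U i j‖ ^ 2 = 1 := by
  simpa only [star_apply, norm_star] using
    sum_norm_sq_row_of_mem_unitaryGroup (Unitary.star_mem hU) j

lemma Matrix.diagonal_mem_unitaryGroup {d : n → 𝕜} (hd : ∀ i, ‖d i‖ = 1) :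
    diagonal d ∈ unitaryGroup n 𝕜 := by
  have h : (fun i => d i * star d i) = fun _ => 1 :=
    funext fun i => by simp [RCLike.mul_conj, hd i]
  rw [mem_unitaryGroup_iff, star_eq_conjTranspose, diagonal_conjTranspose, diagonal_mul_diagonal,
    h, diagonal_one]

lemma Matrix.conj_diagonal_mem_unitaryGroup (hU : U ∈ unitaryGroup n 𝕜) {d : n → 𝕜}
    (hd : ∀ i, ‖d i‖ = 1) : U * diagonal d * star U ∈ unitaryGroup n 𝕜 :=
  mul_mem (mul_mem hU (diagonal_mem_unitaryGroup hd)) (Unitary.star_mem hU)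

lemma Matrix.trace_conj_diagonal (hU : U ∈ unitaryGroup n 𝕜) (d : n → 𝕜) :
    (U * diagonal d * star U).trace = ∑ i, d i := by
  rw [trace_mul_cycle, Unitary.star_mul_self_of_mem hU, Matrix.one_mul, trace_diagonal]

lemma Matrix.isHermitian_conj_diagonal (U : Matrix n n 𝕜) (d : n → ℝ) :
    (U * diagonal (fun i => (d i : 𝕜)) * star U).IsHermitian :=
  isHermitian_mul_mul_conjTranspose U (isHermitian_diagonal_iff.2 fun _ => RCLike.conj_ofReal _)

lemma Matrix.re_trace_conj_diagonal_mul_conj_diagonal (U V : Matrix n n 𝕜) (p μ : n → ℝ) :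
    RCLike.re ((V * diagonal (fun j => (μ j : 𝕜)) * star V) *
      (U * diagonal (fun i => (p i : 𝕜)) * star U)).trace =
      ∑ i, ∑ j, ‖(star U * V) i j‖ ^ 2 * p i * μ j := by
  have h : star U * (V * diagonal (fun j => (μ j : 𝕜)) * star V) * U =
      (star U * V) * diagonal (fun j => (μ j : 𝕜)) * star (star U * V) := by
    simp only [star_mul, star_star, Matrix.mul_assoc]
  rw [trace_mul_conj_diagonal, h, map_sum]
  generalize star U * V = A
  refine Finset.sum_congr rfl fun i _ => ?_
  rw [mul_apply, Finset.mul_sum, map_sum]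
  refine Finset.sum_congr rfl fun j _ => ?_
  rw [mul_diagonal, star_apply, mul_right_comm _ (μ j : 𝕜), RCLike.star_def, RCLike.mul_conj]
  norm_cast
  ring

end Unitary

section Softmax

variable {n : Type*} [Fintype n]

noncomputable def softmax (μ : n → ℝ) (j : n) : ℝ := exp (μ j) / ∑ k, exp (μ k)

lemma softmax_pos (μ : n → ℝ) (j : n) : 0 < softmax μ j :=
  div_pos (exp_pos _) (Finset.sum_pos (fun _ _ => exp_pos _) ⟨j, Finset.mem_univ j⟩)

lemma sum_softmax [Nonempty n] (μ : n → ℝ) : ∑ j, softmax μ j = 1 := by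
  simp only [softmax]
  rw [← Finset.sum_div, div_self (Finset.sum_pos (fun _ _ => exp_pos _) Finset.univ_nonempty).ne']

lemma log_softmax [Nonempty n] (μ : n → ℝ) (j : n) :
    log (softmax μ j) = μ j - log (∑ k, exp (μ k)) := by
  rw [softmax, log_div (exp_pos _).ne'
    (Finset.sum_pos (fun _ _ => exp_pos _) Finset.univ_nonempty).ne', log_exp]

end Softmax

lemma mul_klFun_div (s : ℝ) {t : ℝ} (ht : 0 < t) :
    t * klFun (s / t) = s * log s - s * log t - s + t := by
  rcases eq_or_ne s 0 with rfl | hs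
  · simp [klFun_zero]
  · rw [klFun, log_div hs ht.ne']
    field_simp
    ring

lemma sum_sum_mul_softmax_mul_klFun {ι κ : Type*} [Fintype ι] [Fintype κ] [Nonempty κ]
    {c : ι → κ → ℝ} (hrow : ∀ i, ∑ j, c i j = 1) (hcol : ∀ j, ∑ i, c i j = 1) {p : ι → ℝ}
    (hp1 : ∑ i, p i = 1) (μ : κ → ℝ) :
    ∑ i, ∑ j, c i j * (softmax μ j * klFun (p i / softmax μ j)) =
      ∑ i, p i * log (p i) + log (∑ j, exp (μ j)) - ∑ i, ∑ j, c i j * p i * μ j := by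
  set T := log (∑ j, exp (μ j))
  have hterm : ∀ i j, c i j * (softmax μ j * klFun (p i / softmax μ j)) =
      c i j * (p i * log (p i) + p i * T - p i) + c i j * softmax μ j - c i j * p i * μ j := by
    intro i j
    rw [mul_klFun_div _ (softmax_pos μ j), log_softmax]
    ring
  have hr : ∀ f : ι → ℝ, ∑ i, ∑ j, c i j * f i = ∑ i, f i := fun f =>
    Finset.sum_congr rfl fun i _ => by rw [← Finset.sum_mul, hrow i, one_mul]
  have hc : ∀ g : κ → ℝ, ∑ i, ∑ j, c i j * g j = ∑ j, g j := fun g => by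
    rw [Finset.sum_comm]
    exact Finset.sum_congr rfl fun j _ => by rw [← Finset.sum_mul, hcol j, one_mul]
  simp only [hterm, Finset.sum_add_distrib, Finset.sum_sub_distrib]
  rw [hr (fun i => p i * log (p i) + p i * T - p i), hc (softmax μ), sum_softmax,
    Finset.sum_sub_distrib, Finset.sum_add_distrib, ← Finset.sum_mul, hp1]
  ring

section Exp

variable {n : Type*} [Fintype n] [DecidableEq n]

lemma Matrix.exp_conj_diagonal {U : Matrix n n ℂ} (hU : U ∈ unitaryGroup n ℂ) (μ : n → ℝ) :
    NormedSpace.exp (U * diagonal (fun j => (μ j : ℂ)) * star U) =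
      U * diagonal (fun j => (exp (μ j) : ℂ)) * star U := by
  have hUU := mem_unitaryGroup_iff.1 hU
  rw [← inv_eq_right_inv hUU, exp_conj U _ ⟨⟨U, star U, hUU, mem_unitaryGroup_iff'.1 hU⟩, rfl⟩,
    exp_diagonal]
  congr
  funext j
  rw [Pi.coe_exp, ← Complex.exp_eq_exp_ℂ, Complex.ofReal_exp]

lemma Matrix.IsHermitian.exp_eq {Y : Matrix n n ℂ} (hY : Y.IsHermitian) :
    NormedSpace.exp Y = (hY.eigenvectorUnitary : Matrix n n ℂ) *
      diagonal (fun j => (Real.exp (hY.eigenvalues j) : ℂ)) *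
      star (hY.eigenvectorUnitary : Matrix n n ℂ) :=
  (congrArg NormedSpace.exp hY.spectral_theorem).trans
    (exp_conj_diagonal hY.eigenvectorUnitary.2 _)

lemma Matrix.IsHermitian.trace_exp {Y : Matrix n n ℂ} (hY : Y.IsHermitian) :
    (NormedSpace.exp Y).trace = ((∑ j, Real.exp (hY.eigenvalues j) : ℝ) : ℂ) := by
  rw [hY.exp_eq, trace_conj_diagonal hY.eigenvectorUnitary.2]
  push_cast
  rfl

end Exp

lemma Matrix.IsHermitian.expMap_eq {M : ℕ} {Y : Matrix (Fin M) (Fin M) ℂ} (hY : Y.IsHermitian) :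
    expMap Y = (hY.eigenvectorUnitary : Matrix (Fin M) (Fin M) ℂ) *
      diagonal (fun j => (softmax hY.eigenvalues j : ℂ)) *
      star (hY.eigenvectorUnitary : Matrix (Fin M) (Fin M) ℂ) := by
  rw [expMap, hY.trace_exp, hY.exp_eq, ← Matrix.smul_mul, ← Matrix.mul_smul, ← diagonal_smul]
  congr
  funext j
  simp only [Pi.smul_apply, softmax, smul_eq_mul]
  push_cast
  ring

lemma Matrix.IsHermitian.sum_eigenvalues_eq_one {n : Type*} [Fintype n] [DecidableEq n]
    {Q : Matrix n n ℂ} (hQ : Q.IsHermitian) (hQtr : Q.trace = 1) : ∑ i, hQ.eigenvalues i = 1 := by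
  simpa using congrArg Complex.re (hQ.trace_eq_sum_eigenvalues.symm.trans hQtr)

theorem fenchelCoupling_eq_sum_sum {M : ℕ} {Q Y : Matrix (Fin M) (Fin M) ℂ}
    (hQ : Q.IsHermitian) (hQtr : Q.trace = 1) (hY : Y.IsHermitian) :
    fenchelCoupling Q Y = ∑ i, ∑ j,
      ‖(star (hQ.eigenvectorUnitary : Matrix (Fin M) (Fin M) ℂ) * hY.eigenvectorUnitary) i j‖ ^ 2 *
        (softmax hY.eigenvalues j * klFun (hQ.eigenvalues i / softmax hY.eigenvalues j)) := by
  set U : Matrix (Fin M) (Fin M) ℂ := ↑hQ.eigenvectorUnitary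
  set V : Matrix (Fin M) (Fin M) ℂ := ↑hY.eigenvectorUnitary
  have hp1 := hQ.sum_eigenvalues_eq_one hQtr
  have : Nonempty (Fin M) :=
    Finset.univ_nonempty_iff.1 (Finset.nonempty_of_sum_ne_zero (hp1 ▸ one_ne_zero))
  have hYQ : Y * Q = (V * diagonal (fun j => RCLike.ofReal (hY.eigenvalues j)) * star V) *
      (U * diagonal (fun i => RCLike.ofReal (hQ.eigenvalues i)) * star U) :=
    congrArg₂ (· * ·) hY.spectral_theorem hQ.spectral_theorem
  have hA : star U * V ∈ unitaryGroup (Fin M) ℂ :=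
    mul_mem (Unitary.star_mem hQ.eigenvectorUnitary.2) hY.eigenvectorUnitary.2
  rw [sum_sum_mul_softmax_mul_klFun (sum_norm_sq_row_of_mem_unitaryGroup hA)
    (sum_norm_sq_col_of_mem_unitaryGroup hA) hp1, fenchelCoupling, vnEntropy, dif_pos hQ,
    hY.trace_exp, Complex.ofReal_re, hYQ, ← RCLike.re_to_complex,
    re_trace_conj_diagonal_mul_conj_diagonal]

lemma exists_mem_unitaryGroup_nuclearNorm_eq {M : ℕ} {Δ : Matrix (Fin M) (Fin M) ℂ}
    (hΔ : Δ.IsHermitian) :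
    ∃ S ∈ unitaryGroup (Fin M) ℂ, (nuclearNorm Δ : ℂ) = (S * Δ).trace := by
  set W : Matrix (Fin M) (Fin M) ℂ := ↑hΔ.eigenvectorUnitary
  set δ := hΔ.eigenvalues
  have hΔ' : Δ = W * diagonal (fun k => (δ k : ℂ)) * star W := hΔ.spectral_theorem
  let ε : Fin M → ℝ := fun k => if δ k < 0 then -1 else 1
  have hεδ : ∀ k, ε k * δ k = |δ k| := fun k => by
    by_cases h : δ k < 0
    · simp [ε, h, abs_of_neg h]
    · simp [ε, h, abs_of_nonneg (not_lt.1 h)]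
  refine ⟨W * diagonal (fun k => (ε k : ℂ)) * star W,
    conj_diagonal_mem_unitaryGroup hΔ.eigenvectorUnitary.2 fun k => ?_, ?_⟩
  · by_cases h : δ k < 0 <;> simp [ε, h]
  · have hWW := mem_unitaryGroup_iff'.1 hΔ.eigenvectorUnitary.2
    have hSW : star W * (W * diagonal (fun k => (ε k : ℂ)) * star W) * W =
        diagonal (fun k => (ε k : ℂ)) := by
      simp only [Matrix.mul_assoc]
      rw [hWW, Matrix.mul_one, ← Matrix.mul_assoc, hWW, Matrix.one_mul]
    conv_rhs => rw [hΔ']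
    rw [trace_mul_conj_diagonal, hSW, nuclearNorm, dif_pos hΔ]
    push_cast
    refine Finset.sum_congr rfl fun k _ => ?_
    rw [diagonal_apply_eq, ← hεδ k]
    push_cast
    ring

lemma Matrix.IsHermitian.exists_nuclearNorm_sub_expMap_eq {M : ℕ}
    {Q Y : Matrix (Fin M) (Fin M) ℂ} (hQ : Q.IsHermitian) (hY : Y.IsHermitian) :
    ∃ B ∈ unitaryGroup (Fin M) ℂ, nuclearNorm (Q - expMap Y) = ∑ i, ∑ j,
      (B i j * star ((star (hQ.eigenvectorUnitary : Matrix (Fin M) (Fin M) ℂ) *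
        hY.eigenvectorUnitary) i j)).re * (hQ.eigenvalues i - softmax hY.eigenvalues j) := by
  set U : Matrix (Fin M) (Fin M) ℂ := ↑hQ.eigenvectorUnitary
  set V : Matrix (Fin M) (Fin M) ℂ := ↑hY.eigenvectorUnitary
  have hσ : expMap Y = V * diagonal (fun j => (softmax hY.eigenvalues j : ℂ)) * star V :=
    hY.expMap_eq
  obtain ⟨S, hS, hSΔ⟩ := exists_mem_unitaryGroup_nuclearNorm_eq
    (hQ.sub (hσ ▸ isHermitian_conj_diagonal V _))
  refine ⟨star U * S * V,
    mul_mem (mul_mem (Unitary.star_mem hQ.eigenvectorUnitary.2) hS) hY.eigenvectorUnitary.2, ?_⟩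
  have hN : (nuclearNorm (Q - expMap Y) : ℂ) = ∑ i, ∑ j,
      (star U * S * V) i j * star ((star U * V) i j) *
        (hQ.eigenvalues i - softmax hY.eigenvalues j) := by
    rw [hSΔ, hσ]
    conv_lhs => rw [hQ.spectral_theorem]
    exact trace_mul_sub_conj_diagonal hQ.eigenvectorUnitary.2 hY.eigenvectorUnitary.2 S _ _
  simpa only [Complex.ofReal_re, Complex.re_sum, ← Complex.ofReal_sub, Complex.re_mul_ofReal]
    using congrArg Complex.re hN

theorem fenchelCoupling_lower_bound_general (M : ℕ) (Q Y : Matrix (Fin M) (Fin M) ℂ)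
    (hQ : Q.PosSemidef) (hQtr : Q.trace = 1)
    (hY : Y.IsHermitian) :
    (1 / 2) * nuclearNorm (Q - expMap Y) ^ 2 ≤ fenchelCoupling Q Y := by
  set A : Matrix (Fin M) (Fin M) ℂ :=
    star (hQ.1.eigenvectorUnitary : Matrix (Fin M) (Fin M) ℂ) * hY.eigenvectorUnitary
  have hp1 := hQ.1.sum_eigenvalues_eq_one hQtr
  have : Nonempty (Fin M) :=
    Finset.univ_nonempty_iff.1 (Finset.nonempty_of_sum_ne_zero (hp1 ▸ one_ne_zero))
  obtain ⟨B, hB, hN⟩ := hQ.1.exists_nuclearNorm_sub_expMap_eq hY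
  have key := sq_sum_mul_sub_le_two_mul_sum_mul_klFun
    (a := fun i j => ‖A i j‖) (b := fun i j => ‖B i j‖)
    (e := fun i j => (B i j * star (A i j)).re)
    hQ.eigenvalues_nonneg (softmax_pos hY.eigenvalues) hp1 (sum_softmax _)
    (fun i => (sum_norm_sq_row_of_mem_unitaryGroup hB i).le)
    (fun j => (sum_norm_sq_col_of_mem_unitaryGroup hB j).le)
    fun i j => (Complex.abs_re_le_norm _).trans_eq (by rw [norm_mul, norm_star, mul_comm])
  rw [← hN, ← fenchelCoupling_eq_sum_sum hQ.1 hQtr hY] at key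
  linarith

/-- The Fenchel coupling satisfies F(Q,Y) ≥ (1/2) ‖Q - Q(Y)‖₁². -/
theorem fenchelCoupling_lower_bound (M : ℕ) (Q Y : Matrix (Fin M) (Fin M) ℂ)
    (hQ : Q.PosSemidef) (hQtr : Q.trace = 1)
    (hY : Y.IsHermitian) (hYtr : Y.trace = 0) :
    (1 / 2) * nuclearNorm (Q - expMap Y) ^ 2 ≤ fenchelCoupling Q Y :=
  fenchelCoupling_lower_bound_general M Q Y hQ hQtr hY
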